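/- arXiv:2005.03340 — 3 statements merged into one kernel-verified Lean document; each statement's English description precedes it below -/
import Mathlib

section
/- Let S₀ > 0 and let σ: ℝ → (0,∞) be differentiable. For k ∈ ℝ set d₁(k) = −k/σ(k) + σ(k)/2, d₂(k) = −k/σ(k) − σ(k)/2, f₁(k) = −d₁(k), f₂(k) = −d₂(k). Define P(K) = S₀ e^k Φ(−d₂(k)) − S₀ Φ(−d₁(k)) with k = log(K/S₀), for K > 0, where Φ is the standard normal cumulative distribution function. If K ↦ P(K) is convex on (0,∞), then for every k ∈ ℝ one has f₂(k)·σ'(k) < 1 and f₁(k)·σ'(k) < 1. -/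
/-- The standard normal cumulative distribution function
`Φ(x) = ∫_{-∞}^{x} e^{-t²/2}/√(2π) dt`. -/
noncomputable def stdNormalCDF (x : ℝ) : ℝ :=
  ∫ t in Set.Iic x, Real.exp (-(t ^ 2) / 2) / Real.sqrt (2 * Real.pi)

/-!
Put `x = k/σ + σ/2 = f₂(k)`, `y = k/σ - σ/2 = f₁(k)`, `s = σ'(k)` and `K = S₀ eᵏ`.
Because `K φ(x) = S₀ φ(y)`, the put has slope `P'(K) = Φ(x) + φ(x) s` and tangent intercept
`P(K) - K P'(K) = -S₀ (Φ(y) + φ(y) s)`. The no-arbitrage bounds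
`max(0, K - S₀) ≤ P(K) ≤ K` hold (the lower ones because the Mills ratio `Φ/φ` increases), and
a convex function squeezed like this has slopes in `[0, 1]` and tangent intercepts in
`[-S₀, 0]`. So `Φ(z) + φ(z) s ∈ [0, 1]` for `z = x, y`, and Mills' inequality
`z (1 - Φ(z)) < φ(z)`, together with its mirror image `-z Φ(z) < φ(z)`, turns this into
`z s < 1`.
-/

open Real MeasureTheory Set Filter Topology ProbabilityTheory

local notation "φ" => gaussianPDFReal 0 1

lemma stdNormalCDF_eq_integral (x : ℝ) : stdNormalCDF x = ∫ t in Iic x, φ t := by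
  simp [stdNormalCDF, gaussianPDFReal, div_eq_inv_mul]

lemma integrable_stdGaussianPDF : Integrable φ := integrable_gaussianPDFReal 0 1

lemma stdGaussianPDF_pos (x : ℝ) : 0 < φ x := gaussianPDFReal_pos 0 1 x one_ne_zero

lemma stdGaussianPDF_neg (x : ℝ) : φ (-x) = φ x := by simp [gaussianPDFReal]

lemma stdGaussianPDF_eq : φ = fun x => (√(2 * π))⁻¹ * exp (-x ^ 2 / 2) := by
  simp [gaussianPDFReal_def]

lemma hasDerivAt_stdGaussianPDF (x : ℝ) : HasDerivAt φ (-(x * φ x)) x := by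
  have h : HasDerivAt (fun t : ℝ => -t ^ 2 / 2) (-x) x :=
    ((hasDerivAt_pow 2 x).neg.div_const 2).congr_deriv (by ring)
  rw [stdGaussianPDF_eq]
  exact (h.exp.const_mul (√(2 * π))⁻¹).congr_deriv (by ring)

lemma tendsto_stdGaussianPDF_atTop : Tendsto φ atTop (𝓝 0) := by
  have h : Tendsto (fun t : ℝ => -t ^ 2 / 2) atTop atBot :=
    (tendsto_neg_atTop_atBot.comp ((tendsto_pow_atTop two_ne_zero).atTop_div_const
      (two_pos : (0 : ℝ) < 2))).congr fun t => by simp [neg_div]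
  rw [stdGaussianPDF_eq]
  simpa using (tendsto_exp_atBot.comp h).const_mul (√(2 * π))⁻¹

lemma stdNormalCDF_nonneg (x : ℝ) : 0 ≤ stdNormalCDF x := by
  rw [stdNormalCDF_eq_integral]
  exact setIntegral_nonneg measurableSet_Iic fun t _ => (stdGaussianPDF_pos t).le

lemma one_sub_stdNormalCDF (x : ℝ) : 1 - stdNormalCDF x = ∫ t in Ioi x, φ t := by
  rw [stdNormalCDF_eq_integral, ← integral_gaussianPDFReal_eq_one 0 one_ne_zero,
    ← intervalIntegral.integral_Iic_add_Ioi integrable_stdGaussianPDF.integrableOn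
      integrable_stdGaussianPDF.integrableOn]
  ring

lemma stdNormalCDF_le_one (x : ℝ) : stdNormalCDF x ≤ 1 := by
  have htail : 0 ≤ ∫ t in Ioi x, φ t :=
    setIntegral_nonneg measurableSet_Ioi fun t _ => (stdGaussianPDF_pos t).le
  linarith [one_sub_stdNormalCDF x]

lemma stdNormalCDF_neg (x : ℝ) : stdNormalCDF (-x) = 1 - stdNormalCDF x := by
  rw [one_sub_stdNormalCDF, stdNormalCDF_eq_integral, ← integral_comp_neg_Ioi]
  simp_rw [stdGaussianPDF_neg]

lemma hasDerivAt_stdNormalCDF (x : ℝ) : HasDerivAt stdNormalCDF (φ x) x := by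
  have hφ : Continuous φ := by rw [stdGaussianPDF_eq]; fun_prop
  have h : ∀ y, stdNormalCDF y = stdNormalCDF 0 + ∫ t in (0 : ℝ)..y, φ t := fun y => by
    rw [stdNormalCDF_eq_integral, stdNormalCDF_eq_integral,
      ← intervalIntegral.integral_Iic_sub_Iic integrable_stdGaussianPDF.integrableOn
        integrable_stdGaussianPDF.integrableOn]
    ring
  rw [funext h]
  exact (intervalIntegral.integral_hasDerivAt_right integrable_stdGaussianPDF.intervalIntegrable
    (hφ.stronglyMeasurableAtFilter _ _) hφ.continuousAt).const_add _

lemma integrable_mul_stdGaussianPDF : Integrable fun t => t * φ t := by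
  refine ((integrable_mul_exp_neg_mul_sq (one_half_pos (α := ℝ))).const_mul
    (√(2 * π))⁻¹).congr (Eventually.of_forall fun t => ?_)
  simp only [stdGaussianPDF_eq]
  ring_nf

lemma integral_Ioi_mul_stdGaussianPDF (x : ℝ) : ∫ t in Ioi x, t * φ t = φ x := by
  have h := integral_Ioi_of_hasDerivAt_of_tendsto' (f := -φ) (a := x)
    (fun t _ => by simpa using (hasDerivAt_stdGaussianPDF t).neg)
    integrable_mul_stdGaussianPDF.integrableOn
    (neg_zero (G := ℝ) ▸ tendsto_stdGaussianPDF_atTop.neg)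
  simpa using h

lemma mul_one_sub_stdNormalCDF_lt (x : ℝ) : x * (1 - stdNormalCDF x) < φ x := by
  have hint : IntegrableOn φ (Ioi x) := integrable_stdGaussianPDF.integrableOn
  have hpos : 0 < ∫ t in Ioi x, (t - x) * φ t := by
    have hsupp : Function.support (fun t => (t - x) * φ t) ∩ Ioi x = Ioi x :=
      inter_eq_right.2 fun t ht => mul_ne_zero (sub_ne_zero.2 (ne_of_gt ht))
        (stdGaussianPDF_pos t).ne'
    rw [setIntegral_pos_iff_support_of_nonneg_ae, hsupp, Real.volume_Ioi]
    · exact ENNReal.zero_lt_top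
    · exact ae_restrict_of_forall_mem measurableSet_Ioi fun t ht =>
        mul_nonneg (sub_nonneg.2 (le_of_lt ht)) (stdGaussianPDF_pos t).le
    · exact (integrable_mul_stdGaussianPDF.integrableOn).sub (hint.const_mul x) |>.congr_fun
        (fun t _ => by simp only [Pi.sub_apply]; ring) measurableSet_Ioi
  have : ∫ t in Ioi x, (t - x) * φ t = φ x - x * (1 - stdNormalCDF x) := by
    simp_rw [sub_mul]
    rw [integral_sub integrable_mul_stdGaussianPDF.integrableOn (hint.const_mul x),
      integral_const_mul, integral_Ioi_mul_stdGaussianPDF, one_sub_stdNormalCDF]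
  linarith

lemma neg_mul_stdNormalCDF_lt (x : ℝ) : -x * stdNormalCDF x < φ x := by
  simpa [stdNormalCDF_neg, stdGaussianPDF_neg] using mul_one_sub_stdNormalCDF_lt (-x)

lemma strictMono_stdNormalCDF_div_stdGaussianPDF :
    StrictMono fun x => stdNormalCDF x / φ x := by
  refine strictMono_of_hasDerivAt_pos
    (fun x => (hasDerivAt_stdNormalCDF x).div (hasDerivAt_stdGaussianPDF x)
      (stdGaussianPDF_pos x).ne') fun x => ?_
  have hφ := stdGaussianPDF_pos x
  have h : 0 < φ x * (φ x + x * stdNormalCDF x) := by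
    nlinarith [neg_mul_stdNormalCDF_lt x]
  exact div_pos (by linarith) (pow_pos hφ 2)

lemma mul_lt_one_of_stdNormalCDF_add_mul_mem_Icc {x s : ℝ}
    (h : stdNormalCDF x + φ x * s ∈ Icc 0 1) : x * s < 1 := by
  have hφ := stdGaussianPDF_pos x
  rcases lt_trichotomy x 0 with hx | rfl | hx
  · have := mul_le_mul_of_nonpos_left h.1 hx.le
    nlinarith [neg_mul_stdNormalCDF_lt x]
  · simp
  · have := mul_le_mul_of_nonneg_left h.2 hx.le
    nlinarith [mul_one_sub_stdNormalCDF_lt x]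

lemma ConvexOn.add_mul_sub_le_of_hasDerivAt {S : Set ℝ} {f : ℝ → ℝ} {x y f' : ℝ}
    (hf : ConvexOn ℝ S f) (hx : x ∈ S) (hy : y ∈ S) (hf' : HasDerivAt f f' x) :
    f x + f' * (y - x) ≤ f y := by
  rcases lt_trichotomy x y with hxy | rfl | hxy
  · have := hf.le_slope_of_hasDerivAt hx hy hxy hf'
    rw [slope_def_field, le_div_iff₀ (sub_pos.2 hxy)] at this
    linarith
  · simp
  · have := hf.slope_le_of_hasDerivAt hy hx hxy hf'
    rw [slope_def_field, div_le_iff₀ (sub_pos.2 hxy)] at this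
    linarith

section BoundedByIdentity

variable {P : ℝ → ℝ} {K p : ℝ}

lemma ConvexOn.le_one_of_hasDerivAt_of_le_id (hP : ConvexOn ℝ (Ioi 0) P)
    (hle : ∀ L, 0 < L → P L ≤ L) (hK : 0 < K) (hp : HasDerivAt P p K) : p ≤ 1 := by
  have hlim : Tendsto (fun L => (p * K - P K) / L) atTop (𝓝 0) :=
    tendsto_const_nhds.div_atTop tendsto_id
  have hbound : ∀ᶠ L in atTop, p - 1 ≤ (p * K - P K) / L := by
    filter_upwards [eventually_gt_atTop 0] with L hL
    have := hP.add_mul_sub_le_of_hasDerivAt hK hL hp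
    rw [le_div_iff₀ hL]
    linarith [hle L hL]
  linarith [ge_of_tendsto hlim hbound]

lemma ConvexOn.le_mul_of_hasDerivAt_of_le_id (hP : ConvexOn ℝ (Ioi 0) P)
    (hle : ∀ L, 0 < L → P L ≤ L) (hK : 0 < K) (hp : HasDerivAt P p K) : P K ≤ K * p := by
  have hlim : Tendsto (fun L => (1 - p) * L) (𝓝[>] 0) (𝓝 0) := by
    simpa using ((continuous_const_mul (1 - p)).tendsto 0).mono_left nhdsWithin_le_nhds
  have hbound : ∀ᶠ L in 𝓝[>] 0, P K - K * p ≤ (1 - p) * L := by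
    filter_upwards [self_mem_nhdsWithin] with L hL
    have := hP.add_mul_sub_le_of_hasDerivAt hK hL hp
    linarith [hle L hL]
  linarith [ge_of_tendsto hlim hbound]

end BoundedByIdentity

lemma stdGaussianPDF_sub_half_eq {a : ℝ} (k : ℝ) (ha : a ≠ 0) :
    φ (k / a - a / 2) = exp k * φ (k / a + a / 2) := by
  simp only [stdGaussianPDF_eq]
  rw [mul_left_comm, ← exp_add]
  congr 2
  field_simp
  ring

lemma stdNormalCDF_sub_half_le {a : ℝ} (k : ℝ) (ha : 0 < a) :
    stdNormalCDF (k / a - a / 2) ≤ exp k * stdNormalCDF (k / a + a / 2) := by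
  have h := (strictMono_stdNormalCDF_div_stdGaussianPDF
    (by linarith : k / a - a / 2 < k / a + a / 2)).le
  rw [div_le_div_iff₀ (stdGaussianPDF_pos _) (stdGaussianPDF_pos _),
    stdGaussianPDF_sub_half_eq k ha.ne'] at h
  nlinarith [stdGaussianPDF_pos (k / a + a / 2)]

lemma exp_mul_one_sub_stdNormalCDF_add_half_le {a : ℝ} (k : ℝ) (ha : 0 < a) :
    exp k * (1 - stdNormalCDF (k / a + a / 2)) ≤ 1 - stdNormalCDF (k / a - a / 2) := by
  have h := stdNormalCDF_sub_half_le (-k) ha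
  rw [show -k / a - a / 2 = -(k / a + a / 2) by ring,
    show -k / a + a / 2 = -(k / a - a / 2) by ring, stdNormalCDF_neg, stdNormalCDF_neg] at h
  have := mul_le_mul_of_nonneg_left h (exp_pos k).le
  rwa [← mul_assoc, ← exp_add, add_neg_cancel, exp_zero, one_mul] at this

/-- The Black–Scholes put price divided by `S₀`, as a function of the log-moneyness `k`. -/
noncomputable def normalizedPut (σ : ℝ → ℝ) (k : ℝ) : ℝ :=
  exp k * stdNormalCDF (k / σ k + σ k / 2) - stdNormalCDF (k / σ k - σ k / 2)

section NormalizedPut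

variable {σ : ℝ → ℝ} {k s : ℝ}

lemma normalizedPut_le_exp : normalizedPut σ k ≤ exp k := by
  have := mul_le_mul_of_nonneg_left (stdNormalCDF_le_one (k / σ k + σ k / 2)) (exp_pos k).le
  rw [normalizedPut]
  linarith [stdNormalCDF_nonneg (k / σ k - σ k / 2)]

lemma normalizedPut_nonneg (hσ : 0 < σ k) : 0 ≤ normalizedPut σ k :=
  sub_nonneg.2 (stdNormalCDF_sub_half_le k hσ)

lemma exp_sub_one_le_normalizedPut (hσ : 0 < σ k) : exp k - 1 ≤ normalizedPut σ k := by
  have := exp_mul_one_sub_stdNormalCDF_add_half_le k hσ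
  rw [normalizedPut]
  linarith

lemma hasDerivAt_normalizedPut (hσ : 0 < σ k) (hσ' : HasDerivAt σ s k) :
    HasDerivAt (normalizedPut σ)
      (exp k * (stdNormalCDF (k / σ k + σ k / 2) + φ (k / σ k + σ k / 2) * s)) k := by
  have hdiv : HasDerivAt (fun t => t / σ t) ((1 * σ k - k * s) / σ k ^ 2) k :=
    (hasDerivAt_id k).div hσ' hσ.ne'
  have hx : HasDerivAt (fun t => stdNormalCDF (t / σ t + σ t / 2))
      (φ (k / σ k + σ k / 2) * ((1 * σ k - k * s) / σ k ^ 2 + s / 2)) k :=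
    (hasDerivAt_stdNormalCDF _).comp k (hdiv.add (hσ'.div_const 2))
  have hy : HasDerivAt (fun t => stdNormalCDF (t / σ t - σ t / 2))
      (φ (k / σ k - σ k / 2) * ((1 * σ k - k * s) / σ k ^ 2 - s / 2)) k :=
    (hasDerivAt_stdNormalCDF _).comp k (hdiv.sub (hσ'.div_const 2))
  refine (((hasDerivAt_exp k).mul hx).sub hy).congr_deriv ?_
  rw [stdGaussianPDF_sub_half_eq k hσ.ne']
  ring

lemma normalizedPut_sub_exp_mul (hσ : 0 < σ k) :
    normalizedPut σ k -
        exp k * (stdNormalCDF (k / σ k + σ k / 2) + φ (k / σ k + σ k / 2) * s) =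
      -(stdNormalCDF (k / σ k - σ k / 2) + φ (k / σ k - σ k / 2) * s) := by
  rw [normalizedPut, stdGaussianPDF_sub_half_eq k hσ.ne']
  ring

end NormalizedPut

section PutPrice

variable {S₀ : ℝ} {σ P : ℝ → ℝ}

lemma le_self_of_eq_normalizedPut (hS₀ : 0 < S₀)
    (hP : ∀ K, 0 < K → P K = S₀ * normalizedPut σ (log (K / S₀))) (K : ℝ) (hK : 0 < K) :
    P K ≤ K := by
  have := mul_le_mul_of_nonneg_left
    (normalizedPut_le_exp (σ := σ) (k := log (K / S₀))) hS₀.le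
  rwa [← hP K hK, exp_log (div_pos hK hS₀), mul_div_cancel₀ _ hS₀.ne'] at this

lemma hasDerivAt_of_eq_normalizedPut (hS₀ : 0 < S₀)
    (hP : ∀ K, 0 < K → P K = S₀ * normalizedPut σ (log (K / S₀))) {k s : ℝ} (hσ : 0 < σ k)
    (hσ' : HasDerivAt σ s k) :
    HasDerivAt P (stdNormalCDF (k / σ k + σ k / 2) + φ (k / σ k + σ k / 2) * s)
      (S₀ * exp k) := by
  have hK : 0 < S₀ * exp k := by positivity
  have hlog : log (S₀ * exp k / S₀) = k := by rw [mul_div_cancel_left₀ _ hS₀.ne', log_exp]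
  have hL : HasDerivAt (fun K => log (K / S₀)) (S₀ * exp k)⁻¹ (S₀ * exp k) :=
    (((hasDerivAt_id (S₀ * exp k)).div_const S₀).log (div_pos hK hS₀).ne').congr_deriv
      (by field_simp; rfl)
  have hPK := ((hasDerivAt_normalizedPut hσ hσ').comp_of_eq _ hL hlog.symm).const_mul S₀
  refine (hPK.congr_deriv ?_).congr_of_eventuallyEq ?_
  · field_simp
  · filter_upwards [Ioi_mem_nhds hK] with K hK using hP K hK

/-- At `K = S₀ eᵏ` the two quantities are `P'(K)` and `-(P(K) - K P'(K)) / S₀`. -/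
theorem put_slopes_mem_Icc_of_convexOn (hS₀ : 0 < S₀) (hσ : ∀ k, 0 < σ k)
    (hσ' : Differentiable ℝ σ) (hP : ∀ K, 0 < K → P K = S₀ * normalizedPut σ (log (K / S₀)))
    (hconv : ConvexOn ℝ (Ioi 0) P) (k : ℝ) :
    stdNormalCDF (k / σ k + σ k / 2) + φ (k / σ k + σ k / 2) * deriv σ k ∈ Icc 0 1 ∧
      stdNormalCDF (k / σ k - σ k / 2) + φ (k / σ k - σ k / 2) * deriv σ k ∈ Icc 0 1 := by
  have hK : 0 < S₀ * exp k := by positivity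
  have hderiv := hasDerivAt_of_eq_normalizedPut hS₀ hP (hσ k) (hσ' k).hasDerivAt
  have hle := le_self_of_eq_normalizedPut hS₀ hP
  have hslope_le := hconv.le_one_of_hasDerivAt_of_le_id hle hK hderiv
  have htangent := hconv.le_mul_of_hasDerivAt_of_le_id hle hK hderiv
  rw [hP _ hK, mul_div_cancel_left₀ _ hS₀.ne', log_exp, mul_assoc,
    mul_le_mul_iff_right₀ hS₀] at htangent
  have hsub := normalizedPut_sub_exp_mul (s := deriv σ k) (hσ k)
  have h0 := normalizedPut_nonneg (hσ k)
  have h1 := exp_sub_one_le_normalizedPut (hσ k)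
  refine ⟨⟨?_, hslope_le⟩, ?_, ?_⟩
  · exact (mul_nonneg_iff_of_pos_left (exp_pos k)).1 (h0.trans htangent)
  · linarith
  · nlinarith [exp_pos k]

end PutPrice

/-- if the Black–Scholes Put price
`P(K) = S₀ e^k Φ(−d₂(k)) − S₀ Φ(−d₁(k))`, `k = log(K/S₀)`, is convex on `(0,∞)`,
then for every `k` one has `f₂(k)·σ'(k) < 1` and `f₁(k)·σ'(k) < 1`,
where `f₁ = −d₁` and `f₂ = −d₂`. -/
theorem fukasawa_slope_bounds
    (S₀ : ℝ) (hS₀ : 0 < S₀)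
    (σ : ℝ → ℝ) (hσpos : ∀ k, 0 < σ k) (hσdiff : Differentiable ℝ σ)
    (d₁ d₂ f₁ f₂ : ℝ → ℝ)
    (hd₁ : ∀ k, d₁ k = -k / σ k + σ k / 2)
    (hd₂ : ∀ k, d₂ k = -k / σ k - σ k / 2)
    (hf₁ : ∀ k, f₁ k = -d₁ k)
    (hf₂ : ∀ k, f₂ k = -d₂ k)
    (P : ℝ → ℝ)
    (hP : ∀ K, 0 < K → P K =
      S₀ * Real.exp (Real.log (K / S₀)) * stdNormalCDF (-(d₂ (Real.log (K / S₀)))) -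
        S₀ * stdNormalCDF (-(d₁ (Real.log (K / S₀)))))
    (hconv : ConvexOn ℝ (Set.Ioi (0 : ℝ)) P) :
    ∀ k : ℝ, f₂ k * deriv σ k < 1 ∧ f₁ k * deriv σ k < 1 := by
  have hf₂_eq (k : ℝ) : f₂ k = k / σ k + σ k / 2 := by rw [hf₂, hd₂]; ring
  have hf₁_eq (k : ℝ) : f₁ k = k / σ k - σ k / 2 := by rw [hf₁, hd₁]; ring
  have hP_eq (K : ℝ) (hK : 0 < K) : P K = S₀ * normalizedPut σ (log (K / S₀)) := by
    rw [hP K hK, ← hf₁, ← hf₂, hf₁_eq, hf₂_eq, normalizedPut]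
    ring
  intro k
  obtain ⟨h₂, h₁⟩ := put_slopes_mem_Icc_of_convexOn hS₀ hσpos hσdiff hP_eq hconv k
  rw [hf₂_eq, hf₁_eq]
  exact ⟨mul_lt_one_of_stdNormalCDF_add_mul_mem_Icc h₂,
    mul_lt_one_of_stdNormalCDF_add_mul_mem_Icc h₁⟩
end

section
/- Let b > 0, ρ ∈ (−1,1) with b(1+ρ) < 2 and b(1−ρ) < 2, l* = −ρ/√(1−ρ²), and N'(l) = b(ρ + l/√(l²+1)). For α ∈ ℝ let N_α(l) = α + b(ρl + √(l²+1)), L₋(l; α) = 2N_α(l)(1/N'(l) + 1/4) − l for l < l*, and L₊(l; α) = 2N_α(l)(1/N'(l) − 1/4) − l for l > l*. Then: (i) for every l < l*, ∂L₋/∂α (l; α) = 2(1/N'(l) + 1/4) < −1/2; (ii) for every l > l*, ∂L₊/∂α (l; α) = 2(1/N'(l) − 1/4) > 1/2; consequently, for α < α' (both with α + b√(1−ρ²) > 0 and α' + b√(1−ρ²) > 0), one has (inf_{l>l*} L₊(l; α') − sup_{l<l*} L₋(l; α')) ≥ (inf_{l>l*} L₊(l; α) − sup_{l<l*} L₋(l;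 α)) + (α' − α). -/
/-!
`L₋` and `L₊` are affine in `α` with slopes `2(1/N' ± 1/4)`. Since
`l / √(l² + 1) = tanh (arsinh l)` and `l* = sinh (artanh (−ρ))`, the slope `N'` lies in
`(−b(1−ρ), 0)` left of `l*` and in `(0, b(1+ρ))` right of it, so `b(1 ± ρ) ≤ 2` makes these
slopes `< −1/2` and `> 1/2`. Hence raising `α` to `α'` raises `L₊` and lowers `L₋` pointwise by
at least `(α' − α)/2`, which passes to `inf L₊` and `sup L₋` as soon as these are finite. They
are: `N_α ≥ 0`, `N_α ≥ α + b(1+ρ)l` and `N_α ≥ α − b(1−ρ)l` give `L₊ ≥ α / b(1+ρ)` and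
`L₋ ≤ −α / b(1−ρ)`. The reflection `(ρ, l) ↦ (−ρ, −l)` turns `L₋` into `−L₊`.
-/

open Real Set

theorem Real.tanh_strictMono : StrictMono tanh := by
  intro x y hxy
  by_contra! h
  have hmem : ∀ z, tanh z ∈ Ioo (-1 : ℝ) 1 := fun z => ⟨neg_one_lt_tanh z, tanh_lt_one z⟩
  have := (strictMonoOn_artanh.le_iff_le (hmem y) (hmem x)).2 h
  rw [artanh_tanh, artanh_tanh] at this
  linarith

theorem div_sqrt_sq_add_one_eq_tanh_arsinh (l : ℝ) : l / √(l ^ 2 + 1) = tanh (arsinh l) := by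
  rw [tanh_arsinh, add_comm]

theorem strictMono_div_sqrt_sq_add_one : StrictMono fun l : ℝ => l / √(l ^ 2 + 1) := by
  simp only [div_sqrt_sq_add_one_eq_tanh_arsinh]
  exact tanh_strictMono.comp arsinh_strictMono

theorem sqrt_one_sub_sq_le {ρ : ℝ} (hρ : ρ ^ 2 ≤ 1) (l : ℝ) :
    √(1 - ρ ^ 2) ≤ ρ * l + √(l ^ 2 + 1) := by
  set u := √(1 - ρ ^ 2)
  have hu : u ^ 2 = 1 - ρ ^ 2 := sq_sqrt (by linarith)
  rcases le_or_gt u (ρ * l) with h | h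
  · linarith [sqrt_nonneg (l ^ 2 + 1)]
  · have : (u - ρ * l) ^ 2 ≤ l ^ 2 + 1 := by nlinarith [sq_nonneg (u * l + ρ)]
    linarith [le_sqrt_of_sq_le this]

theorem one_div_lt_two_mul_one_div_sub_quarter {x B : ℝ} (hx : 0 < x) (hxB : x < B)
    (hB : B ≤ 2) : 1 / B < 2 * (1 / x - 1 / 4) := by
  have h1 : 1 / B < 1 / x := one_div_lt_one_div_of_lt hx hxB
  have h2 : 1 / 2 ≤ 1 / B := one_div_le_one_div_of_le (hx.trans hxB) hB
  linarith

theorem div_le_mul_sub {α B k l n : ℝ} (hB : 0 < B) (hn : 0 ≤ n) (hk : 1 / B ≤ k)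
    (hαn : α + B * l ≤ n) : α / B ≤ n * k - l := by
  calc α / B = (α + B * l) / B - l := by field_simp; ring
    _ ≤ n / B - l := by gcongr
    _ = n * (1 / B) - l := by ring
    _ ≤ n * k - l := by gcongr

theorem le_csInf_image_add {ι α : Type*} [ConditionallyCompleteLattice α] [AddGroup α]
    [AddRightMono α] {s : Set ι} {f g : ι → α} {c : α} (hs : s.Nonempty)
    (hf : BddBelow (f '' s)) (h : ∀ x ∈ s, f x + c ≤ g x) :
    sInf (f '' s) + c ≤ sInf (g '' s) := by
  refine le_csInf (hs.image g) ?_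
  rintro _ ⟨x, hx, rfl⟩
  exact le_sub_iff_add_le.1
    ((csInf_le hf (mem_image_of_mem f hx)).trans (le_sub_iff_add_le.2 (h x hx)))

theorem csSup_image_add_le {ι α : Type*} [ConditionallyCompleteLattice α] [AddGroup α]
    [AddRightMono α] {s : Set ι} {f g : ι → α} {c : α} (hs : s.Nonempty)
    (hf : BddAbove (f '' s)) (h : ∀ x ∈ s, g x + c ≤ f x) :
    sSup (g '' s) + c ≤ sSup (f '' s) := by
  rw [← le_sub_iff_add_le]
  refine csSup_le (hs.image g) ?_
  rintro _ ⟨x, hx, rfl⟩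
  exact le_sub_iff_add_le.2 ((h x hx).trans (le_csSup hf (mem_image_of_mem f hx)))

namespace SVI

/-- `N'`, the derivative of `N_α` in `l`. -/
noncomputable def slope (b ρ l : ℝ) : ℝ := b * (ρ + l / √(l ^ 2 + 1))

/-- The normalized SVI function `N_α(l)`. -/
noncomputable def value (b ρ α l : ℝ) : ℝ := α + b * (ρ * l + √(l ^ 2 + 1))

/-- The minimum point `l*` of `N_α`. -/
noncomputable def criticalPoint (ρ : ℝ) : ℝ := -ρ / √(1 - ρ ^ 2)

/-- `L₋(l; α)`. -/
noncomputable def lMinus (b ρ α l : ℝ) : ℝ := 2 * value b ρ α l * (1 / slope b ρ l + 1 / 4) - l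

/-- `L₊(l; α)`. -/
noncomputable def lPlus (b ρ α l : ℝ) : ℝ := 2 * value b ρ α l * (1 / slope b ρ l - 1 / 4) - l

theorem criticalPoint_neg (ρ : ℝ) : criticalPoint (-ρ) = -criticalPoint ρ := by
  simp only [criticalPoint, neg_sq, neg_neg, neg_div]

theorem slope_neg (b ρ l : ℝ) : slope b (-ρ) (-l) = -slope b ρ l := by
  simp only [slope, neg_sq, neg_div]
  ring

theorem value_neg (b ρ α l : ℝ) : value b (-ρ) α (-l) = value b ρ α l := by
  simp only [value, neg_sq, neg_mul_neg]

theorem lPlus_neg (b ρ α l : ℝ) : lPlus b (-ρ) α (-l) = -lMinus b ρ α l := by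
  rw [lPlus, lMinus, slope_neg, value_neg, one_div_neg_eq_neg_one_div]
  ring

theorem criticalPoint_lt_iff {ρ : ℝ} (hρ : ρ ^ 2 < 1) (l : ℝ) :
    criticalPoint ρ < l ↔ -ρ < l / √(l ^ 2 + 1) := by
  have hρ' : -ρ ∈ Ioo (-1 : ℝ) 1 := by
    have := abs_lt.1 ((sq_lt_one_iff_abs_lt_one ρ).1 hρ)
    constructor <;> linarith
  have hsinh : criticalPoint ρ = sinh (artanh (-ρ)) := by
    rw [sinh_artanh hρ', neg_sq, criticalPoint]
  have hfix : criticalPoint ρ / √(criticalPoint ρ ^ 2 + 1) = -ρ := by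
    rw [div_sqrt_sq_add_one_eq_tanh_arsinh, hsinh, arsinh_sinh, tanh_artanh hρ']
  rw [← hfix]
  exact strictMono_div_sqrt_sq_add_one.lt_iff_lt.symm

section

variable {b ρ α l : ℝ}

theorem slope_mem_Ioo (hb : 0 < b) (hρ : ρ ^ 2 < 1) (hl : criticalPoint ρ < l) :
    slope b ρ l ∈ Ioo 0 (b * (1 + ρ)) := by
  have hlow : 0 < ρ + l / √(l ^ 2 + 1) := by linarith [(criticalPoint_lt_iff hρ l).1 hl]
  have hup : l / √(l ^ 2 + 1) < 1 := by
    rw [div_sqrt_sq_add_one_eq_tanh_arsinh]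
    exact tanh_lt_one _
  exact ⟨mul_pos hb hlow, mul_lt_mul_of_pos_left (by linarith) hb⟩

theorem one_div_lt_two_mul_one_div_slope_sub (hb : 0 < b) (hρ : ρ ^ 2 < 1)
    (h₁ : b * (1 + ρ) ≤ 2) (hl : criticalPoint ρ < l) :
    1 / (b * (1 + ρ)) < 2 * (1 / slope b ρ l - 1 / 4) :=
  have hN := slope_mem_Ioo hb hρ hl
  one_div_lt_two_mul_one_div_sub_quarter hN.1 hN.2 h₁

theorem half_lt_two_mul_one_div_slope_sub (hb : 0 < b) (hρ : ρ ^ 2 < 1)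
    (h₁ : b * (1 + ρ) ≤ 2) (hl : criticalPoint ρ < l) :
    1 / 2 < 2 * (1 / slope b ρ l - 1 / 4) :=
  have hN := slope_mem_Ioo hb hρ hl
  (one_div_le_one_div_of_le (hN.1.trans hN.2) h₁).trans_lt
    (one_div_lt_two_mul_one_div_slope_sub hb hρ h₁ hl)

theorem two_mul_one_div_slope_add_lt_neg_half (hb : 0 < b) (hρ : ρ ^ 2 < 1)
    (h₂ : b * (1 - ρ) ≤ 2) (hl : l < criticalPoint ρ) :
    2 * (1 / slope b ρ l + 1 / 4) < -(1 / 2) := by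
  have := half_lt_two_mul_one_div_slope_sub (ρ := -ρ) (l := -l) hb (by rwa [neg_sq])
    (by rwa [← sub_eq_add_neg]) (by rw [criticalPoint_neg]; exact neg_lt_neg hl)
  rw [slope_neg, one_div_neg_eq_neg_one_div] at this
  linarith

theorem value_nonneg (hb : 0 ≤ b) (hρ : ρ ^ 2 ≤ 1) (hα : 0 ≤ α + b * √(1 - ρ ^ 2)) :
    0 ≤ value b ρ α l := by
  have := mul_le_mul_of_nonneg_left (sqrt_one_sub_sq_le hρ l) hb
  rw [value]
  linarith

theorem add_mul_le_value (hb : 0 ≤ b) : α + b * (1 + ρ) * l ≤ value b ρ α l := by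
  have hsqrt : l ≤ √(l ^ 2 + 1) := le_sqrt_of_sq_le (by linarith)
  have := mul_le_mul_of_nonneg_left hsqrt hb
  rw [value]
  linarith

theorem div_le_lPlus (hb : 0 < b) (hρ : ρ ^ 2 < 1) (h₁ : b * (1 + ρ) ≤ 2)
    (hα : 0 ≤ α + b * √(1 - ρ ^ 2)) (hl : criticalPoint ρ < l) :
    α / (b * (1 + ρ)) ≤ lPlus b ρ α l := by
  have hB : 0 < b * (1 + ρ) := (slope_mem_Ioo hb hρ hl).1.trans (slope_mem_Ioo hb hρ hl).2
  have := div_le_mul_sub hB (value_nonneg (l := l) hb.le hρ.le hα)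
    (one_div_lt_two_mul_one_div_slope_sub hb hρ h₁ hl).le (add_mul_le_value hb.le)
  rw [lPlus]
  linarith

theorem lMinus_le_neg_div (hb : 0 < b) (hρ : ρ ^ 2 < 1) (h₂ : b * (1 - ρ) ≤ 2)
    (hα : 0 ≤ α + b * √(1 - ρ ^ 2)) (hl : l < criticalPoint ρ) :
    lMinus b ρ α l ≤ -(α / (b * (1 - ρ))) := by
  have := div_le_lPlus (ρ := -ρ) (l := -l) hb (by rwa [neg_sq])
    (by rwa [← sub_eq_add_neg]) (by rwa [neg_sq]) (by rw [criticalPoint_neg]; exact neg_lt_neg hl)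
  rw [lPlus_neg, ← sub_eq_add_neg] at this
  linarith

theorem lPlus_eq_add (b ρ α α' l : ℝ) :
    lPlus b ρ α' l = lPlus b ρ α l + (α' - α) * (2 * (1 / slope b ρ l - 1 / 4)) := by
  simp only [lPlus, value]
  ring

theorem lPlus_add_le (hb : 0 < b) (hρ : ρ ^ 2 < 1) (h₁ : b * (1 + ρ) ≤ 2)
    (hl : criticalPoint ρ < l) {α' : ℝ} (hαα' : α ≤ α') :
    lPlus b ρ α l + (α' - α) / 2 ≤ lPlus b ρ α' l := by
  have := mul_le_mul_of_nonneg_left (half_lt_two_mul_one_div_slope_sub hb hρ h₁ hl).le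
    (sub_nonneg.2 hαα')
  rw [lPlus_eq_add b ρ α α']
  linarith

theorem lMinus_add_le (hb : 0 < b) (hρ : ρ ^ 2 < 1) (h₂ : b * (1 - ρ) ≤ 2)
    (hl : l < criticalPoint ρ) {α' : ℝ} (hαα' : α ≤ α') :
    lMinus b ρ α' l + (α' - α) / 2 ≤ lMinus b ρ α l := by
  have := lPlus_add_le (ρ := -ρ) (l := -l) hb (by rwa [neg_sq]) (by rwa [← sub_eq_add_neg])
    (by rw [criticalPoint_neg]; exact neg_lt_neg hl) hαα'
  rw [lPlus_neg, lPlus_neg] at this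
  linarith

theorem hasDerivAt_lPlus (b ρ l α : ℝ) :
    HasDerivAt (fun a => lPlus b ρ a l) (2 * (1 / slope b ρ l - 1 / 4)) α := by
  have := (((hasDerivAt_id α).add_const (b * (ρ * l + √(l ^ 2 + 1)))).const_mul 2).mul_const
    (1 / slope b ρ l - 1 / 4) |>.sub_const l
  exact this.congr_deriv (by ring)

theorem hasDerivAt_lMinus (b ρ l α : ℝ) :
    HasDerivAt (fun a => lMinus b ρ a l) (2 * (1 / slope b ρ l + 1 / 4)) α := by
  have := (((hasDerivAt_id α).add_const (b * (ρ * l + √(l ^ 2 + 1)))).const_mul 2).mul_const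
    (1 / slope b ρ l + 1 / 4) |>.sub_const l
  exact this.congr_deriv (by ring)

end

end SVI

open SVI in
/-- monotonicity of `L₋`, `L₊` in the parameter `α`:
`∂L₋/∂α = 2(1/N' + 1/4) < −1/2` on `l < l*`, `∂L₊/∂α = 2(1/N' − 1/4) > 1/2`
on `l > l*`; consequently the Fukasawa interval grows at least linearly in `α`. -/
theorem L_pm_monotone_in_alpha
    (b ρ : ℝ) (hb : 0 < b) (hρ₁ : -1 < ρ) (hρ₂ : ρ < 1)
    (h₁ : b * (1 + ρ) < 2) (h₂ : b * (1 - ρ) < 2)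
    (lstar : ℝ) (hlstar : lstar = -ρ / Real.sqrt (1 - ρ ^ 2))
    (N' : ℝ → ℝ) (hN' : ∀ l, N' l = b * (ρ + l / Real.sqrt (l ^ 2 + 1)))
    (Nα : ℝ → ℝ → ℝ) (hNα : ∀ α l, Nα α l = α + b * (ρ * l + Real.sqrt (l ^ 2 + 1)))
    (Lm Lp : ℝ → ℝ → ℝ)
    (hLm : ∀ α l, Lm α l = 2 * Nα α l * (1 / N' l + 1 / 4) - l)
    (hLp : ∀ α l, Lp α l = 2 * Nα α l * (1 / N' l - 1 / 4) - l) :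
    (∀ l, l < lstar → ∀ α : ℝ,
      HasDerivAt (fun a => Lm a l) (2 * (1 / N' l + 1 / 4)) α ∧
      2 * (1 / N' l + 1 / 4) < -(1 / 2)) ∧
    (∀ l, lstar < l → ∀ α : ℝ,
      HasDerivAt (fun a => Lp a l) (2 * (1 / N' l - 1 / 4)) α ∧
      1 / 2 < 2 * (1 / N' l - 1 / 4)) ∧
    (∀ α α' : ℝ, α < α' →
      0 < α + b * Real.sqrt (1 - ρ ^ 2) → 0 < α' + b * Real.sqrt (1 - ρ ^ 2) →
      sInf ((fun l => Lp α l) '' Set.Ioi lstar) -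
          sSup ((fun l => Lm α l) '' Set.Iio lstar) + (α' - α) ≤
        sInf ((fun l => Lp α' l) '' Set.Ioi lstar) -
          sSup ((fun l => Lm α' l) '' Set.Iio lstar)) := by
  obtain rfl : N' = slope b ρ := funext hN'
  obtain rfl : Nα = value b ρ := funext₂ hNα
  obtain rfl : Lm = lMinus b ρ := funext₂ hLm
  obtain rfl : Lp = lPlus b ρ := funext₂ hLp
  obtain rfl : lstar = criticalPoint ρ := hlstar
  have hρ : ρ ^ 2 < 1 := by nlinarith
  refine ⟨fun l hl α => ⟨hasDerivAt_lMinus b ρ l α,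
      two_mul_one_div_slope_add_lt_neg_half hb hρ h₂.le hl⟩,
    fun l hl α => ⟨hasDerivAt_lPlus b ρ l α, half_lt_two_mul_one_div_slope_sub hb hρ h₁.le hl⟩,
    fun α α' hαα' hα _ => ?_⟩
  have hPlus := le_csInf_image_add (c := (α' - α) / 2) nonempty_Ioi
    ⟨_, forall_mem_image.2 fun l hl => div_le_lPlus hb hρ h₁.le hα.le hl⟩
    fun l (hl : _ < l) => lPlus_add_le hb hρ h₁.le hl hαα'.le
  have hMinus := csSup_image_add_le (c := (α' - α) / 2) nonempty_Iio
    ⟨_, forall_mem_image.2 fun l hl => lMinus_le_neg_div hb hρ h₂.le hα.le hl⟩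
    fun l (hl : l < _) => lMinus_add_le hb hρ h₂.le hl hαα'.le
  linarith
end

section
/- Let b > 0, α ≥ 0, and consider the normalized SVI function with ρ = −1: N(l) = α + b(√(l²+1) − l), which is positive and strictly decreasing. Let G₂(l) = N''(l) − N'(l)²/(2N(l)), where N'(l) = b(l/√(l²+1) − 1) and N''(l) = b/(l²+1)^{3/2}. Then G₂ has exactly one zero l₁, which is negative; G₂(l) > 0 for all l > l₁ and G₂(l) < 0 for all l < l₁; and lim_{l→+∞} G₂(l) = 0 with G₂ positive near +∞, while lim_{l→−∞} G₂(l) = 0 with G₂ negative near −∞. -/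
/-! With `w = √(l² + 1) − l`, a decreasing bijection `ℝ → (0, ∞)` with inverse `w ↦ (w⁻¹ − w) / 2`,
one has `2 w √(l² + 1) = w² + 1`, `N = α + b w` and `N' = −b w / √(l² + 1)`, whence
`G₂ = b / (4 √(l² + 1)³ N) · (4α + b (3w − w³))`. The cubic is positive on `(0, 1]` and strictly
decreasing on `[1, ∞)`, where it changes sign once, at some `v > 1`; so `G₂` changes sign exactly at
`l₁ = (v⁻¹ − v) / 2 < 0`. Both terms of `G₂` are bounded by `b / √(l² + 1)`, which gives the limits. -/

open Filter Topology

noncomputable def wing (l : ℝ) : ℝ := √(l ^ 2 + 1) - l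

lemma sq_sqrt_sq_add_one (l : ℝ) : √(l ^ 2 + 1) ^ 2 = l ^ 2 + 1 := Real.sq_sqrt (by positivity)

lemma abs_lt_sqrt_sq_add_one (l : ℝ) : |l| < √(l ^ 2 + 1) :=
  Real.lt_sqrt_of_sq_lt (by rw [sq_abs]; linarith)

lemma sqrt_sq_add_one_pos (l : ℝ) : 0 < √(l ^ 2 + 1) := Real.sqrt_pos.2 (by positivity)

lemma wing_pos (l : ℝ) : 0 < wing l := by
  have := abs_lt_sqrt_sq_add_one l
  unfold wing; linarith [le_abs_self l]

lemma wing_mul_sqrt_add_self (l : ℝ) : wing l * (√(l ^ 2 + 1) + l) = 1 := by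
  unfold wing; linear_combination sq_sqrt_sq_add_one l

lemma half_inv_wing_sub_wing (l : ℝ) : ((wing l)⁻¹ - wing l) / 2 = l := by
  rw [inv_eq_of_mul_eq_one_right (wing_mul_sqrt_add_self l), wing]; ring

lemma wing_strictAnti : StrictAnti wing := by
  intro x y hxy
  by_contra! h
  have : y ≤ x := calc
    y = ((wing y)⁻¹ - wing y) / 2 := (half_inv_wing_sub_wing y).symm
    _ ≤ ((wing x)⁻¹ - wing x) / 2 := by have := wing_pos x; gcongr
    _ = x := half_inv_wing_sub_wing x
  exact this.not_gt hxy

lemma wing_zero : wing 0 = 1 := by simp [wing]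

lemma wing_half_inv_sub {v : ℝ} (hv : 0 < v) : wing ((v⁻¹ - v) / 2) = v := by
  have h : √(((v⁻¹ - v) / 2) ^ 2 + 1) = (v⁻¹ + v) / 2 := by
    rw [Real.sqrt_eq_iff_eq_sq (by positivity) (by positivity)]
    field_simp; ring
  rw [wing, h]; ring

lemma two_mul_wing_mul_sqrt (l : ℝ) : 2 * wing l * √(l ^ 2 + 1) = wing l ^ 2 + 1 := by
  have := wing_mul_sqrt_add_self l
  unfold wing at *; linear_combination this

lemma rpow_three_halves_sq_add_one (l : ℝ) :
    (l ^ 2 + 1) ^ ((3 : ℝ) / 2) = √(l ^ 2 + 1) ^ 3 := by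
  rw [Real.sqrt_eq_rpow, ← Real.rpow_mul_natCast (by positivity)]
  norm_num

section SVI

variable (b α : ℝ)

noncomputable def sviN (l : ℝ) : ℝ := α + b * (√(l ^ 2 + 1) - l)

noncomputable def sviN' (l : ℝ) : ℝ := b * (l / √(l ^ 2 + 1) - 1)

noncomputable def sviN'' (l : ℝ) : ℝ := b / (l ^ 2 + 1) ^ ((3 : ℝ) / 2)

noncomputable def sviG₂ (l : ℝ) : ℝ := sviN'' b l - sviN' b l ^ 2 / (2 * sviN b α l)

def sviCubic (v : ℝ) : ℝ := 4 * α + b * (3 * v - v ^ 3)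

variable {b α}

lemma sviN_eq (l : ℝ) : sviN b α l = α + b * wing l := rfl

lemma sviN_pos (hb : 0 < b) (hα : 0 ≤ α) (l : ℝ) : 0 < sviN b α l := by
  have := wing_pos l; rw [sviN_eq]; positivity

lemma sviN_strictAnti (hb : 0 < b) : StrictAnti (sviN b α) :=
  (wing_strictAnti.const_mul hb).const_add α

lemma sviN'_eq (l : ℝ) : sviN' b l = -(b * wing l / √(l ^ 2 + 1)) := by
  have := sqrt_sq_add_one_pos l
  unfold sviN' wing; field_simp; ring

lemma sviN''_eq (l : ℝ) : sviN'' b l = b / √(l ^ 2 + 1) ^ 3 := by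
  rw [sviN'', rpow_three_halves_sq_add_one]

lemma sviG₂_eq (hb : 0 < b) (hα : 0 ≤ α) (l : ℝ) :
    sviG₂ b α l = b / (4 * √(l ^ 2 + 1) ^ 3 * sviN b α l) * sviCubic b α (wing l) := by
  have hs := sqrt_sq_add_one_pos l
  have hN := (sviN_pos hb hα l).ne'
  rw [sviG₂, sviN'_eq, sviN''_eq]
  rw [sviN_eq] at *
  unfold sviCubic
  field_simp
  linear_combination (-2 * b * wing l) * two_mul_wing_mul_sqrt l

lemma sviCubic_pos_of_le_one (hb : 0 < b) (hα : 0 ≤ α) {v : ℝ} (hv₀ : 0 < v) (hv₁ : v ≤ 1) :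
    0 < sviCubic b α v := by
  have : 0 < b * v * (3 - v ^ 2) := mul_pos (mul_pos hb hv₀) (by nlinarith)
  unfold sviCubic; nlinarith

lemma sviCubic_strictAntiOn (hb : 0 < b) : StrictAntiOn (sviCubic b α) (Set.Ici 1) := by
  intro x hx y hy hxy
  have hx : (1 : ℝ) ≤ x := hx
  have hy : (1 : ℝ) ≤ y := hy
  have key : sviCubic b α x - sviCubic b α y = b * (y - x) * (x ^ 2 + x * y + y ^ 2 - 3) := by
    unfold sviCubic; ring
  have : 0 < x ^ 2 + x * y + y ^ 2 - 3 := by nlinarith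
  have : 0 < b * (y - x) * (x ^ 2 + x * y + y ^ 2 - 3) := by
    have := sub_pos.2 hxy; positivity
  linarith

lemma exists_sviCubic_eq_zero (hb : 0 < b) (hα : 0 ≤ α) :
    ∃ v, 1 < v ∧ sviCubic b α v = 0 := by
  set t := α / b
  have ht : 0 ≤ t := div_nonneg hα hb.le
  have hneg : sviCubic b α (2 + t) < 0 := by
    have : sviCubic b α (2 + t) = -b * (2 + 5 * t + 6 * t ^ 2 + t ^ 3) := by
      simp only [sviCubic, t]; field_simp; ring
    rw [this]
    have : 0 < 2 + 5 * t + 6 * t ^ 2 + t ^ 3 := by positivity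
    nlinarith
  obtain ⟨v, hv, hv₀⟩ := intermediate_value_Icc' (show (1 : ℝ) ≤ 2 + t by linarith)
    (by unfold sviCubic; fun_prop : Continuous (sviCubic b α)).continuousOn
    ⟨hneg.le, (sviCubic_pos_of_le_one hb hα one_pos le_rfl).le⟩
  refine ⟨v, lt_of_le_of_ne hv.1 ?_, hv₀⟩
  rintro rfl
  exact (sviCubic_pos_of_le_one hb hα one_pos le_rfl).ne' hv₀

lemma abs_sviG₂_le (hb : 0 < b) (hα : 0 ≤ α) (l : ℝ) : |sviG₂ b α l| ≤ b / √(l ^ 2 + 1) := by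
  have hs := sqrt_sq_add_one_pos l
  have hw := wing_pos l
  have hN := sviN_pos hb hα l
  have hN'' : sviN'' b l ≤ b / √(l ^ 2 + 1) := by
    rw [sviN''_eq]
    refine div_le_div_of_nonneg_left hb.le hs (le_self_pow₀ ?_ three_ne_zero)
    rw [Real.one_le_sqrt]; nlinarith
  have hN' : sviN' b l ^ 2 / (2 * sviN b α l) ≤ b / √(l ^ 2 + 1) := calc
    sviN' b l ^ 2 / (2 * sviN b α l) ≤ sviN' b l ^ 2 / (2 * (b * wing l)) := by
      gcongr; rw [sviN_eq]; linarith
    _ = b / √(l ^ 2 + 1) * (wing l / (2 * √(l ^ 2 + 1))) := by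
      rw [sviN'_eq]; field_simp
    _ ≤ b / √(l ^ 2 + 1) := by
      refine mul_le_of_le_one_right (by positivity) ((div_le_one (by positivity)).2 ?_)
      unfold wing; linarith [neg_le_abs l, abs_lt_sqrt_sq_add_one l]
  exact abs_sub_le_of_nonneg_of_le (by rw [sviN''_eq]; positivity) hN'' (by positivity) hN'

lemma tendsto_sviG₂_zero (hb : 0 < b) (hα : 0 ≤ α) {F : Filter ℝ}
    (hF : Tendsto (fun l => |l|) F atTop) : Tendsto (sviG₂ b α) F (𝓝 0) :=
  squeeze_zero_norm (abs_sviG₂_le hb hα) <| tendsto_const_nhds.div_atTop <|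
    tendsto_atTop_mono (fun l => (abs_lt_sqrt_sq_add_one l).le) hF

lemma exists_sviG₂_sign_change (hb : 0 < b) (hα : 0 ≤ α) :
    ∃ l₁ < 0, sviG₂ b α l₁ = 0 ∧ (∀ l, l₁ < l → 0 < sviG₂ b α l) ∧
      ∀ l, l < l₁ → sviG₂ b α l < 0 := by
  obtain ⟨v, hv₁, hv₀⟩ := exists_sviCubic_eq_zero hb hα
  have hv : 0 < v := one_pos.trans hv₁
  have hcoeff (l : ℝ) : 0 < b / (4 * √(l ^ 2 + 1) ^ 3 * sviN b α l) := by
    have := sqrt_sq_add_one_pos l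
    have := sviN_pos hb hα l
    positivity
  have hwing := wing_half_inv_sub hv
  refine ⟨(v⁻¹ - v) / 2, ?_, ?_, fun l hl => ?_, fun l hl => ?_⟩
  · rw [← wing_strictAnti.lt_iff_gt, hwing, wing_zero]; exact hv₁
  · rw [sviG₂_eq hb hα, hwing, hv₀, mul_zero]
  · rw [sviG₂_eq hb hα]
    refine mul_pos (hcoeff l) ?_
    have hlt : wing l < v := hwing ▸ wing_strictAnti hl
    rcases le_or_gt (wing l) 1 with h | h
    · exact sviCubic_pos_of_le_one hb hα (wing_pos l) h
    · exact hv₀ ▸ sviCubic_strictAntiOn hb h.le hv₁.le hlt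
  · rw [sviG₂_eq hb hα]
    refine mul_neg_of_pos_of_neg (hcoeff l) ?_
    have hlt : v < wing l := hwing ▸ wing_strictAnti hl
    exact hv₀ ▸ sviCubic_strictAntiOn hb hv₁.le (hv₁.trans hlt).le hlt

end SVI

/-- monotone case `ρ = −1`: for `N(l) = α + b(√(l²+1) − l)`
with `b > 0`, `α ≥ 0`, the function `G₂ = N'' − N'²/(2N)` has exactly one zero
`l₁ < 0`, is positive on `(l₁, ∞)` and negative on `(−∞, l₁)`, and tends to `0`
at both `+∞` (from above) and `−∞` (from below). -/
theorem G2_single_zero_rho_minus_one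
    (b α : ℝ) (hb : 0 < b) (hα : 0 ≤ α)
    (N N' N'' G₂ : ℝ → ℝ)
    (hN : ∀ l, N l = α + b * (Real.sqrt (l ^ 2 + 1) - l))
    (hN' : ∀ l, N' l = b * (l / Real.sqrt (l ^ 2 + 1) - 1))
    (hN'' : ∀ l, N'' l = b / (l ^ 2 + 1) ^ ((3 : ℝ) / 2))
    (hG₂ : ∀ l, G₂ l = N'' l - (N' l) ^ 2 / (2 * N l)) :
    (∀ l, 0 < N l) ∧ StrictAnti N ∧
    ∃ l₁ : ℝ, l₁ < 0 ∧ G₂ l₁ = 0 ∧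
      (∀ l, G₂ l = 0 ↔ l = l₁) ∧
      (∀ l, l₁ < l → 0 < G₂ l) ∧
      (∀ l, l < l₁ → G₂ l < 0) ∧
      Filter.Tendsto G₂ Filter.atTop (nhds 0) ∧
      Filter.Tendsto G₂ Filter.atBot (nhds 0) := by
  obtain rfl : N = sviN b α := funext hN
  obtain rfl : N' = sviN' b := funext hN'
  obtain rfl : N'' = sviN'' b := funext hN''
  obtain rfl : G₂ = sviG₂ b α := funext hG₂
  obtain ⟨l₁, hl₁, hzero, hpos, hneg⟩ := exists_sviG₂_sign_change hb hα
  refine ⟨sviN_pos hb hα, sviN_strictAnti hb, l₁, hl₁, hzero, fun l => ⟨fun h => ?_, ?_⟩,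
    hpos, hneg, tendsto_sviG₂_zero hb hα tendsto_abs_atTop_atTop,
    tendsto_sviG₂_zero hb hα tendsto_abs_atBot_atTop⟩
  · rcases lt_trichotomy l l₁ with hlt | heq | hgt
    · exact absurd h (hneg l hlt).ne
    · exact heq
    · exact absurd h (hpos l hgt).ne'
  · rintro rfl
    exact hzero
end
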